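/- arXiv:2012.03629 — 3 statements merged into one kernel-verified Lean document; each statement's English description precedes it below -/
import Mathlib

section
/- Let T = (T(n,k))_{n,k≥0} be the array with entries in ℤ[c,d,e] defined by T(0,k) = δ_{k0} and, for n ≥ 1, T(n,k) = c·T(n−1,k−1) + (dk+e)·T(n−1,k), with T(n,k) = 0 for k < 0. Then for all n,k ≥ 0, T(n,k) equals the sum, over all set partitions π of {1,2,…,n+1} into exactly k+1 nonempty blocks, of the product over i = 2,…,n+1 of the weight w_π(i), where w_π(i) = e if smallest(π,i) = 1, w_π(i) = c if smallest(π,i) = i, and w_π(i) = d if smallest(π,i) ∉ {1, i}. -/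
/- The polynomial ring ℤ[c,d,e]: variable 0 ↦ c, 1 ↦ d, 2 ↦ e. -/
noncomputable def cVar : MvPolynomial (Fin 3) ℤ := MvPolynomial.X 0
noncomputable def dVar : MvPolynomial (Fin 3) ℤ := MvPolynomial.X 1
noncomputable def eVar : MvPolynomial (Fin 3) ℤ := MvPolynomial.X 2

/-- The array `T(n,k)` with entries in ℤ[c,d,e], defined by `T(0,k) = δ_{k0}` and
`T(n,k) = c·T(n−1,k−1) + (dk+e)·T(n−1,k)` for `n ≥ 1`.  The second index ranges
over ℤ, so the convention `T(n,k) = 0` for `k < 0` is automatic. -/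
noncomputable def T : ℕ → ℤ → MvPolynomial (Fin 3) ℤ
  | 0, k => if k = 0 then 1 else 0
  | n + 1, k =>
      cVar * T n (k - 1) + (dVar * ((k : ℤ) : MvPolynomial (Fin 3) ℤ) + eVar) * T n k

/-- `smallest π i`: the smallest element of the block of the set partition `π`
containing `i`.  Here the ground set `{1,…,n+1}` is modelled by `Fin (n+1)`
(so the element `1` corresponds to `0 : Fin (n+1)`). -/
noncomputable def smallest {n : ℕ} (π : Finpartition (Finset.univ : Finset (Fin (n + 1))))
    (i : Fin (n + 1)) : Fin (n + 1) :=
  (π.part i).min' ⟨i, π.mem_part (Finset.mem_univ i)⟩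

/-- The weight `w_π(i)`: `e` if `smallest(π,i) = 1`, `c` if `smallest(π,i) = i`,
and `d` otherwise. -/
noncomputable def weight {n : ℕ} (π : Finpartition (Finset.univ : Finset (Fin (n + 1))))
    (i : Fin (n + 1)) : MvPolynomial (Fin 3) ℤ :=
  if smallest π i = 0 then eVar else if smallest π i = i then cVar else dVar

/-!
A set partition `π` of `Fin (n + 1)` is determined by the map `smallest π`, and the maps arising
this way are exactly those with `f i ≤ i` and `f ∘ f = f`, the blocks corresponding to the fixed
points. Such a map on `Fin (n + 2)` is a map `g` on `Fin (n + 1)` together with the image of the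
new last element, which is either the last element itself (a new block, weight `c`) or one of the
`k + 1` fixed points of `g`: `0` (weight `e`) or one of the other `k` (weight `d` each). So the
weighted sums over these maps satisfy the recurrence defining `T`.
-/

open Finset

section MinRetraction

variable {n : ℕ}

def IsMinRetraction (f : Fin (n + 1) → Fin (n + 1)) : Prop :=
  (∀ i, f i ≤ i) ∧ ∀ i, f (f i) = f i

instance : DecidablePred (IsMinRetraction (n := n)) := fun f => by
  unfold IsMinRetraction; infer_instance

def minRetractions (n : ℕ) : Finset (Fin (n + 1) → Fin (n + 1)) :=
  univ.filter IsMinRetraction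

def fixedPts (f : Fin (n + 1) → Fin (n + 1)) : Finset (Fin (n + 1)) :=
  univ.filter fun i => f i = i

@[simp] lemma mem_minRetractions {f : Fin (n + 1) → Fin (n + 1)} :
    f ∈ minRetractions n ↔ IsMinRetraction f := by
  simp [minRetractions]

@[simp] lemma mem_fixedPts {f : Fin (n + 1) → Fin (n + 1)} {i : Fin (n + 1)} :
    i ∈ fixedPts f ↔ f i = i := by
  simp [fixedPts]

lemma IsMinRetraction.zero_mem_fixedPts {f : Fin (n + 1) → Fin (n + 1)} (hf : IsMinRetraction f) :
    0 ∈ fixedPts f :=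
  mem_fixedPts.2 (le_antisymm (hf.1 0) (Fin.zero_le _))

def extendLast (g : Fin (n + 1) → Fin (n + 1)) (v : Fin (n + 2)) : Fin (n + 2) → Fin (n + 2) :=
  Fin.lastCases v fun j => (g j).castSucc

@[simp] lemma extendLast_castSucc (g : Fin (n + 1) → Fin (n + 1)) (v : Fin (n + 2))
    (j : Fin (n + 1)) : extendLast g v j.castSucc = (g j).castSucc :=
  Fin.lastCases_castSucc ..

@[simp] lemma extendLast_last (g : Fin (n + 1) → Fin (n + 1)) (v : Fin (n + 2)) :
    extendLast g v (Fin.last (n + 1)) = v :=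
  Fin.lastCases_last ..

/-- The junk value `0` is never taken when `f i ≤ i` for all `i`. -/
def restrictInit (f : Fin (n + 2) → Fin (n + 2)) : Fin (n + 1) → Fin (n + 1) :=
  fun j => if h : f j.castSucc = Fin.last (n + 1) then 0 else (f j.castSucc).castPred h

lemma castSucc_restrictInit {f : Fin (n + 2) → Fin (n + 2)} (hf : ∀ i, f i ≤ i)
    (j : Fin (n + 1)) : (restrictInit f j).castSucc = f j.castSucc := by
  have h : f j.castSucc ≠ Fin.last (n + 1) :=
    ((hf _).trans_lt (Fin.castSucc_lt_last j)).ne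
  simp [restrictInit, h]

@[simp] lemma restrictInit_extendLast (g : Fin (n + 1) → Fin (n + 1)) (v : Fin (n + 2)) :
    restrictInit (extendLast g v) = g := by
  funext j
  simp [restrictInit, (Fin.castSucc_lt_last (g j)).ne]

lemma extendLast_restrictInit {f : Fin (n + 2) → Fin (n + 2)} (hf : ∀ i, f i ≤ i) :
    extendLast (restrictInit f) (f (Fin.last (n + 1))) = f := by
  funext i
  induction i using Fin.lastCases with
  | last => simp
  | cast j => rw [extendLast_castSucc, castSucc_restrictInit hf]

lemma IsMinRetraction.restrictInit {f : Fin (n + 2) → Fin (n + 2)} (hf : IsMinRetraction f) :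
    IsMinRetraction (restrictInit f) := by
  refine ⟨fun j => ?_, fun j => Fin.castSucc_injective _ ?_⟩
  · rw [← Fin.castSucc_le_castSucc_iff, castSucc_restrictInit hf.1]
    exact hf.1 _
  · rw [castSucc_restrictInit hf.1, castSucc_restrictInit hf.1]
    exact hf.2 _

lemma IsMinRetraction.extendLast {g : Fin (n + 1) → Fin (n + 1)} (hg : IsMinRetraction g)
    {v : Fin (n + 2)} (hv : extendLast g v v = v) : IsMinRetraction (extendLast g v) := by
  constructor
  · intro i
    induction i using Fin.lastCases with
    | last => simp [Fin.le_last]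
    | cast j => simpa using hg.1 j
  · intro i
    induction i using Fin.lastCases with
    | last => simpa using hv
    | cast j => simp [hg.2]

lemma filter_extendLast_apply_self_eq (g : Fin (n + 1) → Fin (n + 1)) :
    univ.filter (fun v => extendLast g v v = v)
      = cons (Fin.last (n + 1)) ((fixedPts g).map Fin.castSuccEmb) (by simp) := by
  ext v
  induction v using Fin.lastCases with
  | last => simp
  | cast j => simp [(Fin.castSucc_lt_last j).ne]

lemma sum_minRetractions_succ {M : Type*} [AddCommMonoid M]
    (F : (Fin (n + 2) → Fin (n + 2)) → M) :
    ∑ f ∈ minRetractions (n + 1), F f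
      = ∑ g ∈ minRetractions n, (F (extendLast g (Fin.last (n + 1)))
          + ∑ u ∈ fixedPts g, F (extendLast g u.castSucc)) := by
  have hsplit : ∀ g, F (extendLast g (Fin.last (n + 1)))
      + ∑ u ∈ fixedPts g, F (extendLast g u.castSucc)
      = ∑ v ∈ univ.filter (fun v => extendLast g v v = v), F (extendLast g v) := by
    intro g
    rw [filter_extendLast_apply_self_eq, sum_cons, sum_map]
    rfl
  rw [sum_congr rfl fun g _ => hsplit g, sum_sigma']
  refine sum_nbij' (fun f => ⟨restrictInit f, f (Fin.last (n + 1))⟩)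
    (fun p => extendLast p.1 p.2) ?_ ?_ ?_ ?_ ?_
  · intro f hf
    simp only [mem_minRetractions] at hf
    simp only [mem_sigma, mem_minRetractions, mem_filter, mem_univ, true_and]
    refine ⟨hf.restrictInit, ?_⟩
    rw [extendLast_restrictInit hf.1]
    exact hf.2 _
  · rintro ⟨g, v⟩ hp
    simp only [mem_sigma, mem_minRetractions, mem_filter, mem_univ, true_and] at hp ⊢
    exact hp.1.extendLast hp.2
  · intro f hf
    exact extendLast_restrictInit (mem_minRetractions.1 hf).1
  · rintro ⟨g, v⟩ _
    simp
  · intro f hf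
    simp [extendLast_restrictInit (mem_minRetractions.1 hf).1]

lemma card_fixedPts_extendLast (g : Fin (n + 1) → Fin (n + 1)) (v : Fin (n + 2)) :
    #(fixedPts (extendLast g v)) = #(fixedPts g) + if v = Fin.last (n + 1) then 1 else 0 := by
  simp only [fixedPts, card_filter, Fin.sum_univ_castSucc, extendLast_castSucc,
    Fin.castSucc_inj, extendLast_last]

end MinRetraction

section Weights

variable {R : Type*} [CommSemiring R] (c d e : R) {n : ℕ}

def stepWeight (f : Fin (n + 1) → Fin (n + 1)) (i : Fin (n + 1)) : R :=
  if f i = 0 then e else if f i = i then c else d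

def retractionWeight (f : Fin (n + 1) → Fin (n + 1)) : R :=
  ∏ i ∈ univ.filter (fun i => i ≠ 0), stepWeight c d e f i

def retractionSum (n k : ℕ) : R :=
  ∑ f ∈ (minRetractions n).filter (fun f => #(fixedPts f) = k), retractionWeight c d e f

lemma retractionWeight_extendLast (g : Fin (n + 1) → Fin (n + 1)) (v : Fin (n + 2)) :
    retractionWeight c d e (extendLast g v)
      = retractionWeight c d e g * if v = 0 then e else if v = Fin.last (n + 1) then c else d := by
  rw [retractionWeight, retractionWeight, prod_filter, prod_filter, Fin.prod_univ_castSucc]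
  simp [stepWeight, Fin.castSucc_eq_zero_iff]

lemma sum_ite_eq_add_card_sub_one_nsmul {α M : Type*} [DecidableEq α] [AddCommMonoid M]
    {s : Finset α} {a : α} (ha : a ∈ s) (x y : M) :
    ∑ u ∈ s, (if u = a then x else y) = x + (#s - 1) • y := by
  rw [← add_sum_erase _ _ ha, if_pos rfl, ← card_erase_of_mem ha, ← sum_const]
  exact congrArg _ (sum_congr rfl fun u hu => if_neg (ne_of_mem_erase hu))

lemma retractionSum_zero_right (n : ℕ) : retractionSum c d e n 0 = 0 := by
  refine sum_eq_zero fun f hf => absurd (mem_filter.1 hf).2 ?_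
  exact (card_pos.2 ⟨0, (mem_minRetractions.1 (mem_filter.1 hf).1).zero_mem_fixedPts⟩).ne'

lemma retractionSum_zero_left (k : ℕ) : retractionSum c d e 0 k = if k = 1 then 1 else 0 := by
  have hmin : minRetractions 0 = {id} := by
    ext f
    have : f = id := funext fun i => Subsingleton.elim (α := Fin 1) _ _
    simp [this, IsMinRetraction]
  have hnone : (univ.filter fun i : Fin 1 => i ≠ 0) = ∅ := by decide
  rw [retractionSum, hmin, sum_filter, sum_singleton, retractionWeight, hnone, prod_empty]
  simp [fixedPts, eq_comm]

lemma retractionSum_succ (n k : ℕ) :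
    retractionSum c d e (n + 1) (k + 1)
      = c * retractionSum c d e n k + (k * d + e) * retractionSum c d e n (k + 1) := by
  have hstep : ∀ g ∈ minRetractions n,
      (if #(fixedPts (extendLast g (Fin.last (n + 1)))) = k + 1 then
          retractionWeight c d e (extendLast g (Fin.last (n + 1))) else 0)
        + ∑ u ∈ fixedPts g, (if #(fixedPts (extendLast g u.castSucc)) = k + 1 then
          retractionWeight c d e (extendLast g u.castSucc) else 0)
      = (if #(fixedPts g) = k then c * retractionWeight c d e g else 0)
        + (if #(fixedPts g) = k + 1 then (k * d + e) * retractionWeight c d e g else 0) := by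
    intro g hg
    have h0 := (mem_minRetractions.1 hg).zero_mem_fixedPts
    simp only [card_fixedPts_extendLast, retractionWeight_extendLast, if_pos,
      (Fin.castSucc_lt_last _).ne, if_false, add_zero, add_left_inj, Fin.castSucc_eq_zero_iff]
    rw [sum_ite_irrel, sum_const_zero, ← mul_sum, sum_ite_eq_add_card_sub_one_nsmul h0,
      if_neg Fin.last_pos'.ne']
    split_ifs with hk hk' hk'
    · omega
    · ring
    · rw [hk', add_tsub_cancel_right, nsmul_eq_mul]
      ring
    · rfl
  rw [retractionSum, sum_filter, sum_minRetractions_succ, sum_congr rfl hstep, sum_add_distrib,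
    retractionSum, retractionSum, mul_sum, mul_sum, sum_filter, sum_filter]

end Weights

lemma T_of_neg (n : ℕ) {k : ℤ} (hk : k < 0) : T n k = 0 := by
  induction n generalizing k with
  | zero => simp [T, hk.ne]
  | succ n ih => simp [T, ih hk, ih (by omega : k - 1 < 0)]

lemma T_eq_retractionSum (n k : ℕ) : T n k = retractionSum cVar dVar eVar n (k + 1) := by
  induction n generalizing k with
  | zero => simp [T, retractionSum_zero_left]
  | succ n ih =>
    rw [T, retractionSum_succ, Int.cast_natCast, ih]
    cases k with
    | zero => simp [T_of_neg, retractionSum_zero_right]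
    | succ k =>
      rw [Nat.cast_succ, add_sub_cancel_right, ih]
      ring

section Partitions

variable {n : ℕ} (π : Finpartition (univ : Finset (Fin (n + 1))))

lemma smallest_mem_part (i : Fin (n + 1)) : smallest π i ∈ π.part i :=
  min'_mem _ _

lemma smallest_le (i : Fin (n + 1)) : smallest π i ≤ i :=
  min'_le _ _ (π.mem_part (mem_univ i))

lemma part_smallest (i : Fin (n + 1)) : π.part (smallest π i) = π.part i :=
  π.part_eq_of_mem (π.part_mem.2 (mem_univ i)) (smallest_mem_part π i)

lemma smallest_eq_smallest_iff {i j : Fin (n + 1)} :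
    smallest π i = smallest π j ↔ π.part i = π.part j := by
  refine ⟨fun h => ?_, fun h => by simp only [smallest, h]⟩
  rw [← part_smallest π i, h, part_smallest]

lemma isMinRetraction_smallest : IsMinRetraction (smallest π) :=
  ⟨smallest_le π, fun i => (smallest_eq_smallest_iff π).2 (part_smallest π i)⟩

lemma card_parts_eq_card_fixedPts : #π.parts = #(fixedPts (smallest π)) := by
  refine (card_bij (fun i _ => π.part i) (fun i _ => π.part_mem.2 (mem_univ i)) ?_ ?_).symm
  · intro i hi j hj hij
    rw [← mem_fixedPts.1 hi, ← mem_fixedPts.1 hj]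
    exact (smallest_eq_smallest_iff π).2 hij
  · intro t ht
    obtain ⟨i, hi⟩ := π.nonempty_of_mem_parts ht
    exact ⟨smallest π i, mem_fixedPts.2 ((smallest_eq_smallest_iff π).2 (part_smallest π i)),
      (part_smallest π i).trans (π.part_eq_of_mem ht hi)⟩

lemma parts_eq_image_part : π.parts = univ.image π.part := by
  ext t
  simp only [mem_image, mem_univ, true_and]
  refine ⟨fun ht => ?_, fun ⟨i, hi⟩ => hi ▸ π.part_mem.2 (mem_univ i)⟩
  obtain ⟨i, hi⟩ := π.nonempty_of_mem_parts ht
  exact ⟨i, π.part_eq_of_mem ht hi⟩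

lemma part_eq_filter_smallest (i : Fin (n + 1)) :
    π.part i = univ.filter fun j => smallest π j = smallest π i := by
  ext j
  rw [mem_filter, smallest_eq_smallest_iff, π.mem_part_iff_part_eq_part (mem_univ j) (mem_univ i)]
  simp

lemma smallest_injective : Function.Injective (smallest (n := n)) := by
  intro π π' h
  ext1
  rw [parts_eq_image_part, parts_eq_image_part]
  exact image_congr fun i _ => by rw [part_eq_filter_smallest, part_eq_filter_smallest, h]

instance (f : Fin (n + 1) → Fin (n + 1)) : DecidableRel (Setoid.ker f) :=
  fun i j => inferInstanceAs (Decidable (f i = f j))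

lemma smallest_ofSetoid_ker {f : Fin (n + 1) → Fin (n + 1)} (hf : IsMinRetraction f) :
    smallest (Finpartition.ofSetoid (Setoid.ker f)) = f := by
  have hmem : ∀ {i j}, j ∈ (Finpartition.ofSetoid (Setoid.ker f)).part i ↔ f i = f j :=
    Finpartition.mem_part_ofSetoid_iff_rel.trans Setoid.ker_def
  funext i
  refine le_antisymm (min'_le _ _ (hmem.2 (hf.2 i).symm)) (le_min' _ _ _ fun j hj => ?_)
  exact (hmem.1 hj).trans_le (hf.1 j)

end Partitions

lemma sum_partitions_eq_retractionSum (n k : ℕ) :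
    ∑ π : {π : Finpartition (univ : Finset (Fin (n + 1))) // #π.parts = k},
        ∏ i ∈ univ.filter (fun i : Fin (n + 1) => i ≠ 0), weight π.1 i
      = retractionSum cVar dVar eVar n k := by
  refine sum_nbij (fun π => smallest π.1) ?_ ?_ ?_ fun _ _ => rfl
  · rintro ⟨π, hπ⟩ -
    simp [isMinRetraction_smallest, ← card_parts_eq_card_fixedPts, hπ]
  · exact fun π _ π' _ h => Subtype.ext (smallest_injective h)
  · intro f hf
    rw [mem_coe, mem_filter, mem_minRetractions] at hf
    refine ⟨⟨Finpartition.ofSetoid (Setoid.ker f), ?_⟩, mem_coe.2 (mem_univ _), ?_⟩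
    · rw [card_parts_eq_card_fixedPts, smallest_ofSetoid_ker hf.1, hf.2]
    · exact smallest_ofSetoid_ker hf.1

/-- `T(n,k)` is the sum, over all set partitions `π` of `{1,…,n+1}` into exactly
`k+1` nonempty blocks, of `∏_{i=2}^{n+1} w_π(i)`.  (The product over
`i = 2,…,n+1` is the product over the nonzero elements of `Fin (n+1)`.) -/
theorem T_eq_sum_over_partitions (n k : ℕ) :
    T n (k : ℤ)
      = ∑ π : {π : Finpartition (Finset.univ : Finset (Fin (n + 1))) //
            π.parts.card = k + 1},
          ∏ i ∈ Finset.univ.filter (fun i : Fin (n + 1) => i ≠ 0), weight π.1 i := by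
  rw [T_eq_retractionSum, sum_partitions_eq_retractionSum]
end

section
/- Let T = (T(n,k))_{n,k≥0} be the array with entries in ℤ[c,d,e] defined by T(0,k) = δ_{k0} and, for n ≥ 1, T(n,k) = c·T(n−1,k−1) + (dk+e)·T(n−1,k), with T(n,k) = 0 for n < 0 or k < 0. Then T also satisfies, for all n ≥ 1 and k ≥ 0, the recurrence T(n,k) = e·T(n−1,k) + Σ_{m=0}^{n−1} binom(n−1,m) · d^m · c · T(n−1−m, k−1). -/
lemma Pkey (n : ℕ) : ∀ k : ℤ,
    cVar * T n (k - 1) + dVar * ((k : ℤ) : MvPolynomial (Fin 3) ℤ) * T n k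
      = ∑ m ∈ Finset.range (n + 1),
          ((n.choose m : ℕ) : MvPolynomial (Fin 3) ℤ) * dVar ^ m * cVar * T (n - m) (k - 1) := by
  induction n with
  | zero =>
    intro k
    by_cases h : k = 0
    · subst h; simp [T]
    · simp [T, h]
  | succ n ih =>
    intro k
    have hsum :
        (∑ m ∈ Finset.range (n + 1 + 1),
            (((n+1).choose m : ℕ) : MvPolynomial (Fin 3) ℤ) * dVar ^ m * cVar
              * T (n + 1 - m) (k - 1))
        = (∑ m ∈ Finset.range (n + 1),
            ((n.choose m : ℕ) : MvPolynomial (Fin 3) ℤ) * dVar ^ m * cVar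
              * T (n + 1 - m) (k - 1))
          + dVar * (∑ m ∈ Finset.range (n + 1),
            ((n.choose m : ℕ) : MvPolynomial (Fin 3) ℤ) * dVar ^ m * cVar
              * T (n - m) (k - 1)) := by
      rw [Finset.sum_range_succ'
            (fun m => (((n+1).choose m : ℕ) : MvPolynomial (Fin 3) ℤ) * dVar ^ m * cVar
              * T (n + 1 - m) (k - 1)) (n + 1),
          Finset.sum_range_succ'
            (fun m => ((n.choose m : ℕ) : MvPolynomial (Fin 3) ℤ) * dVar ^ m * cVar
              * T (n + 1 - m) (k - 1)) n]
      have h0 : ∀ i ∈ Finset.range (n+1),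
          (((n+1).choose (i+1) : ℕ) : MvPolynomial (Fin 3) ℤ) * dVar ^ (i+1) * cVar
            * T (n + 1 - (i+1)) (k - 1)
          = ((n.choose (i+1) : ℕ) : MvPolynomial (Fin 3) ℤ) * dVar ^ (i+1) * cVar
              * T (n - i) (k - 1)
            + dVar * (((n.choose i : ℕ) : MvPolynomial (Fin 3) ℤ) * dVar ^ i * cVar
              * T (n - i) (k - 1)) := by
        intro i _
        rw [Nat.choose_succ_succ']
        push_cast
        ring
      rw [Finset.sum_congr rfl h0, Finset.sum_add_distrib, Finset.mul_sum]
      have hlast : (∑ i ∈ Finset.range (n+1),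
          ((n.choose (i+1) : ℕ) : MvPolynomial (Fin 3) ℤ) * dVar ^ (i+1) * cVar
            * T (n - i) (k - 1))
        = ∑ i ∈ Finset.range n,
          ((n.choose (i+1) : ℕ) : MvPolynomial (Fin 3) ℤ) * dVar ^ (i+1) * cVar
            * T (n - i) (k - 1) := by
        rw [Finset.sum_range_succ]
        simp
      rw [hlast]
      simp [Nat.succ_sub_succ]
      ring
    rw [hsum]
    have h1 : ∀ i ∈ Finset.range (n+1),
        ((n.choose i : ℕ) : MvPolynomial (Fin 3) ℤ) * dVar ^ i * cVar * T (n + 1 - i) (k - 1)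
        = cVar * (((n.choose i : ℕ) : MvPolynomial (Fin 3) ℤ) * dVar ^ i * cVar
            * T (n - i) (k - 1 - 1))
          + (dVar * (((k - 1 : ℤ)) : MvPolynomial (Fin 3) ℤ) + eVar)
            * (((n.choose i : ℕ) : MvPolynomial (Fin 3) ℤ) * dVar ^ i * cVar
            * T (n - i) (k - 1)) := by
      intro i hi
      have hni : n + 1 - i = (n - i) + 1 := by
        simp at hi; omega
      rw [hni]
      simp only [T]
      ring
    rw [Finset.sum_congr rfl h1, Finset.sum_add_distrib, ← Finset.mul_sum, ← Finset.mul_sum,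
      ← ih (k - 1), ← ih k]
    simp only [T]
    push_cast
    ring


/-- The alternate recurrence: for `n ≥ 1` and `k ≥ 0`,
`T(n,k) = e·T(n−1,k) + Σ_{m=0}^{n−1} binom(n−1,m)·d^m·c·T(n−1−m,k−1)`. -/
theorem T_alternate_recurrence (n : ℕ) (hn : 1 ≤ n) (k : ℕ) :
    T n (k : ℤ)
      = eVar * T (n - 1) (k : ℤ)
        + ∑ m ∈ Finset.range n,
            ((n - 1).choose m : MvPolynomial (Fin 3) ℤ) * dVar ^ m * cVar
              * T (n - 1 - m) ((k : ℤ) - 1) := by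
  obtain ⟨n', rfl⟩ : ∃ n', n = n' + 1 := ⟨n - 1, by omega⟩
  simp only [Nat.add_sub_cancel]
  rw [← Pkey n' (k : ℤ)]
  simp only [T]
  ring
end

section
/- Fix integers n ≥ 1 and 0 ≤ k ≤ n. Consider the alphabet consisting of symbols a_{i,j,l} for natural numbers i,j,l with j ≤ i, and symbols e_{i,l} for natural numbers i,l. Call a word w = w_n w_{n−1} ⋯ w_1 of length n in this alphabet valid (for parameters n,k) if: (i) w_n is either e_{n−1,0} or a_{n−1,j,0} for some 0 ≤ j ≤ n−1; (ii) w_1 is either e_{0,k} or (if k ≥ 1) a_{0,0,k−1}; (iii) for each 1 ≤ i ≤ n−1, if w_{i+1} = a_{i,j,l} then w_i is either e_{i−1,l+1} or a_{i−1,j',l+1} for some j ≤ j' ≤ i−1; and (iv) for each 1 ≤ i ≤ n−1, if w_{i+1} = e_{i,l} then w_i is either e_{i−1,l} or a_{i−1,j,l} for some 0 ≤ j ≤ i−1. Then the number of valid words equals the Stirling subset number S(n+1, n+1−k), the number of set partitions of {1,…,n+1} into exactly n+1−k nonempty blocks. -/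
/-!
Read from the top, the third index of each letter of a valid word counts the letters `a` above
it, so a valid word has exactly `k` letters `a`, and the second indices weakly increase along
every run of consecutive letters `a`. Removing the top letter expresses the number of valid words
of length `m + 1` with a prescribed kind of top letter through the same numbers for length `m`.
The number of partitions of `{1, …, n + 1}` into `b` blocks in which `n + 1` shares its block
with no element `≤ j` satisfies the same recursion with the same initial values, and for `j = 0`
it is `S(n + 1, b)`. That `S(m, j)` counts partitions into `j` blocks is the usual recurrence: a
new element either forms a block of its own or joins one of the existing blocks.
-/

/-- Letters: `a i j l` stands for the symbol `a_{i,j,l}` and `e i l` for the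
symbol `e_{i,l}`. -/
inductive Letter : Type
  | a : ℕ → ℕ → ℕ → Letter
  | e : ℕ → ℕ → Letter

/-- A letter belongs to the alphabet iff it is some `e_{i,l}`, or some
`a_{i,j,l}` with `j ≤ i`. -/
def InAlphabet : Letter → Prop
  | .a i j _ => j ≤ i
  | .e _ _ => True

/-- A word `w = w_n w_{n−1} ⋯ w_1` of length `n` is modelled as a function
`w : Fin n → Letter`, with `w_i` (for `1 ≤ i ≤ n`) being the value at
`⟨i − 1, _⟩ : Fin n`.  The word is *valid* for the parameters `(n,k)` if every
letter lies in the alphabet and conditions (i)–(iv) hold: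
(i) `w_n` is either `e_{n−1,0}` or `a_{n−1,j,0}` for some `0 ≤ j ≤ n−1`;
(ii) `w_1` is either `e_{0,k}` or (if `k ≥ 1`) `a_{0,0,k−1}`;
(iii) if `w_{i+1} = a_{i,j,l}` (for `1 ≤ i ≤ n−1`) then `w_i` is either
`e_{i−1,l+1}` or `a_{i−1,j',l+1}` for some `j ≤ j' ≤ i−1`;
(iv) if `w_{i+1} = e_{i,l}` (for `1 ≤ i ≤ n−1`) then `w_i` is either
`e_{i−1,l}` or `a_{i−1,j,l}` for some `0 ≤ j ≤ i−1`. -/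
def ValidWord (n k : ℕ) (hn : 1 ≤ n) (w : Fin n → Letter) : Prop :=
  (∀ t : Fin n, InAlphabet (w t)) ∧
  (w ⟨n - 1, by omega⟩ = .e (n - 1) 0 ∨
    ∃ j, j ≤ n - 1 ∧ w ⟨n - 1, by omega⟩ = .a (n - 1) j 0) ∧
  (w ⟨0, by omega⟩ = .e 0 k ∨ (1 ≤ k ∧ w ⟨0, by omega⟩ = .a 0 0 (k - 1))) ∧
  (∀ (i j l : ℕ) (_h1 : 1 ≤ i) (_h2 : i ≤ n - 1),
    w ⟨i, by omega⟩ = .a i j l →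
      (w ⟨i - 1, by omega⟩ = .e (i - 1) (l + 1) ∨
        ∃ j', j ≤ j' ∧ j' ≤ i - 1 ∧ w ⟨i - 1, by omega⟩ = .a (i - 1) j' (l + 1))) ∧
  (∀ (i l : ℕ) (_h1 : 1 ≤ i) (_h2 : i ≤ n - 1),
    w ⟨i, by omega⟩ = .e i l →
      (w ⟨i - 1, by omega⟩ = .e (i - 1) l ∨
        ∃ j, j ≤ i - 1 ∧ w ⟨i - 1, by omega⟩ = .a (i - 1) j l))

/-- The Stirling subset number `S(m,j)`: the number of set partitions of an
`m`-element set into exactly `j` nonempty blocks. -/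
noncomputable def stirlingSubset (m j : ℕ) : ℕ :=
  Nat.card {P : Finpartition (Finset.univ : Finset (Fin m)) // P.parts.card = j}

open Finset Nat

namespace Finpartition

variable {α : Type*} [DecidableEq α] {a : α} {s : Finset α}

lemma subset_singleton_iff_of_mem_parts (P : Finpartition s) {d : Finset α} (hd : d ∈ P.parts) :
    d ⊆ {a} ↔ d = {a} := by
  rw [subset_singleton_iff, or_iff_right (P.ne_empty hd)]

lemma singleton_notMem_parts (ha : a ∉ s) (P : Finpartition s) : {a} ∉ P.parts :=
  fun h => ha (P.le h (mem_singleton_self a))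

lemma insert_notMem_erase_parts (ha : a ∉ s) (P : Finpartition s) (t : Finset α) :
    insert a t ∉ P.parts.erase t :=
  fun h => ha (P.le (mem_of_mem_erase h) (mem_insert_self a t))

lemma sup_erase_parts {P : Finpartition s} {t : Finset α} (ht : t ∈ P.parts) :
    (P.parts.erase t).sup id = s \ t := by
  ext x
  simp only [mem_sup, mem_erase, id, mem_sdiff]
  constructor
  · rintro ⟨d, ⟨hdt, hd⟩, hx⟩
    exact ⟨P.le hd hx, fun hxt => hdt (P.eq_of_mem_parts hd ht hx hxt)⟩
  · rintro ⟨hxs, hxt⟩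
    obtain ⟨d, hd, hx⟩ := P.exists_mem hxs
    exact ⟨d, ⟨fun hdt => hxt (hdt ▸ hx), hd⟩, hx⟩

def eraseInsert (ha : a ∉ s) (Q : Finpartition (insert a s)) : Finpartition s :=
  (Q.avoid {a}).copy (by rw [sdiff_singleton_eq_erase, erase_insert ha])

lemma mem_eraseInsert (ha : a ∉ s) {Q : Finpartition (insert a s)} {c : Finset α} :
    c ∈ (eraseInsert ha Q).parts ↔ ∃ d ∈ Q.parts, d ≠ {a} ∧ d.erase a = c := by
  simp only [eraseInsert, copy, mem_avoid, sdiff_singleton_eq_erase]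
  exact exists_congr fun d => and_congr_right fun hd => by
    rw [Q.subset_singleton_iff_of_mem_parts hd]

lemma parts_eraseInsert_of_part_eq (ha : a ∉ s) {Q : Finpartition (insert a s)}
    (h : Q.part a = {a}) : (eraseInsert ha Q).parts = Q.parts.erase {a} := by
  ext c
  rw [mem_eraseInsert, mem_erase]
  constructor
  · rintro ⟨d, hd, hda, rfl⟩
    have had : a ∉ d := fun had => hda ((Q.part_eq_of_mem hd had).symm.trans h)
    rw [erase_eq_of_notMem had]
    exact ⟨hda, hd⟩
  · rintro ⟨hca, hc⟩
    have hac : a ∉ c := fun hac => hca ((Q.part_eq_of_mem hc hac).symm.trans h)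
    exact ⟨c, hc, hca, erase_eq_of_notMem hac⟩

lemma parts_eraseInsert_of_part_ne (ha : a ∉ s) {Q : Finpartition (insert a s)}
    (h : Q.part a ≠ {a}) :
    (eraseInsert ha Q).parts = insert ((Q.part a).erase a) (Q.parts.erase (Q.part a)) := by
  have haQ : a ∈ insert a s := mem_insert_self a s
  ext c
  rw [mem_eraseInsert, mem_insert, mem_erase]
  constructor
  · rintro ⟨d, hd, hda, rfl⟩
    by_cases had : a ∈ d
    · exact .inl (by rw [Q.part_eq_of_mem hd had])
    · rw [erase_eq_of_notMem had]
      exact .inr ⟨fun hdQ => had (hdQ ▸ Q.mem_part_self.2 haQ), hd⟩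
  · rintro (rfl | ⟨hca, hc⟩)
    · exact ⟨Q.part a, Q.part_mem.2 haQ, h, rfl⟩
    · have hac : a ∉ c := fun hac => hca (Q.part_eq_of_mem hc hac).symm
      refine ⟨c, hc, ?_, erase_eq_of_notMem hac⟩
      rintro rfl
      exact hac (mem_singleton_self a)

lemma erase_part_notMem_erase_parts {Q : Finpartition (insert a s)} (h : Q.part a ≠ {a}) :
    (Q.part a).erase a ∉ Q.parts.erase (Q.part a) := by
  have haQ : a ∈ Q.part a := Q.mem_part_self.2 (mem_insert_self a s)
  intro hc
  obtain ⟨x, hx⟩ := (erase_nonempty haQ).2 ((nontrivial_iff_ne_singleton haQ).2 h)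
  exact (mem_erase.1 hc).1 <| Q.eq_of_mem_parts (mem_erase.1 hc).2
    (Q.part_mem.2 (mem_insert_self a s)) hx (mem_of_mem_erase hx)

lemma erase_part_mem_eraseInsert (ha : a ∉ s) {Q : Finpartition (insert a s)}
    (h : Q.part a ≠ {a}) : (Q.part a).erase a ∈ (eraseInsert ha Q).parts := by
  rw [parts_eraseInsert_of_part_ne ha h]
  exact mem_insert_self _ _

lemma card_parts_eraseInsert_of_part_eq (ha : a ∉ s) {Q : Finpartition (insert a s)}
    (h : Q.part a = {a}) : #(eraseInsert ha Q).parts + 1 = #Q.parts := by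
  rw [parts_eraseInsert_of_part_eq ha h,
    card_erase_add_one (h ▸ Q.part_mem.2 (mem_insert_self a s))]

lemma card_parts_eraseInsert_of_part_ne (ha : a ∉ s) {Q : Finpartition (insert a s)}
    (h : Q.part a ≠ {a}) : #(eraseInsert ha Q).parts = #Q.parts := by
  rw [parts_eraseInsert_of_part_ne ha h, card_insert_of_notMem (erase_part_notMem_erase_parts h),
    card_erase_add_one (Q.part_mem.2 (mem_insert_self a s))]

def insertSingleton (ha : a ∉ s) (P : Finpartition s) : Finpartition (insert a s) :=
  P.extend (b := {a}) (by simp) (disjoint_singleton_right.2 ha)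
    (by rw [sup_eq_union, union_comm, insert_eq])

lemma parts_insertSingleton (ha : a ∉ s) (P : Finpartition s) :
    (insertSingleton ha P).parts = insert {a} P.parts := rfl

lemma part_insertSingleton (ha : a ∉ s) (P : Finpartition s) :
    (insertSingleton ha P).part a = {a} :=
  part_eq_of_mem _ (mem_insert_self _ _) (mem_singleton_self a)

lemma card_parts_insertSingleton (ha : a ∉ s) (P : Finpartition s) :
    #(insertSingleton ha P).parts = #P.parts + 1 := by
  rw [parts_insertSingleton, card_insert_of_notMem (singleton_notMem_parts ha P)]

def insertIntoPart (ha : a ∉ s) (P : Finpartition s) {t : Finset α} (ht : t ∈ P.parts) :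
    Finpartition (insert a s) :=
  (P.ofSubset (erase_subset t P.parts) (sup_erase_parts ht)).extend (b := insert a t)
    (insert_ne_empty a t) (disjoint_insert_right.2 ⟨by simp [ha], sdiff_disjoint⟩)
    (by rw [sup_eq_union, union_insert, sdiff_union_of_subset (P.le ht)])

variable {t : Finset α}

lemma parts_insertIntoPart (ha : a ∉ s) (P : Finpartition s) (ht : t ∈ P.parts) :
    (insertIntoPart ha P ht).parts = insert (insert a t) (P.parts.erase t) := rfl

lemma part_insertIntoPart (ha : a ∉ s) (P : Finpartition s) (ht : t ∈ P.parts) :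
    (insertIntoPart ha P ht).part a = insert a t :=
  part_eq_of_mem _ (mem_insert_self _ _) (mem_insert_self a t)

lemma part_insertIntoPart_ne (ha : a ∉ s) (P : Finpartition s) (ht : t ∈ P.parts) :
    (insertIntoPart ha P ht).part a ≠ {a} := by
  rw [part_insertIntoPart, ← nontrivial_iff_ne_singleton (mem_insert_self a t),
    ← erase_nonempty (mem_insert_self a t), erase_insert fun hat => ha (P.le ht hat)]
  exact P.nonempty_of_mem_parts ht

lemma card_parts_insertIntoPart (ha : a ∉ s) (P : Finpartition s) (ht : t ∈ P.parts) :
    #(insertIntoPart ha P ht).parts = #P.parts := by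
  rw [parts_insertIntoPart, card_insert_of_notMem (insert_notMem_erase_parts ha P t),
    card_erase_add_one ht]

lemma insertSingleton_eraseInsert (ha : a ∉ s) {Q : Finpartition (insert a s)}
    (h : Q.part a = {a}) : insertSingleton ha (eraseInsert ha Q) = Q := by
  ext1
  rw [parts_insertSingleton, parts_eraseInsert_of_part_eq ha h,
    insert_erase (h ▸ Q.part_mem.2 (mem_insert_self a s))]

lemma insertIntoPart_eraseInsert (ha : a ∉ s) {Q : Finpartition (insert a s)}
    (h : Q.part a ≠ {a}) :
    insertIntoPart ha (eraseInsert ha Q) (erase_part_mem_eraseInsert ha h) = Q := by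
  ext1
  rw [parts_insertIntoPart, parts_eraseInsert_of_part_ne ha h,
    erase_insert (erase_part_notMem_erase_parts h),
    insert_erase (Q.mem_part_self.2 (mem_insert_self a s)),
    insert_erase (Q.part_mem.2 (mem_insert_self a s))]

lemma eraseInsert_insertSingleton (ha : a ∉ s) (P : Finpartition s) :
    eraseInsert ha (insertSingleton ha P) = P := by
  ext1
  rw [parts_eraseInsert_of_part_eq ha (part_insertSingleton ha P), parts_insertSingleton,
    erase_insert (singleton_notMem_parts ha P)]

lemma eraseInsert_insertIntoPart (ha : a ∉ s) (P : Finpartition s) (ht : t ∈ P.parts) :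
    eraseInsert ha (insertIntoPart ha P ht) = P := by
  ext1
  rw [parts_eraseInsert_of_part_ne ha (part_insertIntoPart_ne ha P ht), part_insertIntoPart,
    parts_insertIntoPart, erase_insert fun h => ha (P.le ht h),
    erase_insert (insert_notMem_erase_parts ha P t), insert_erase ht]

def insertEquiv (ha : a ∉ s) (b : ℕ) :
    {Q : Finpartition (insert a s) // #Q.parts = b + 1} ≃
      {P : Finpartition s // #P.parts = b} ⊕
        Σ P : {P : Finpartition s // #P.parts = b + 1}, {t // t ∈ P.1.parts} where
  toFun Q :=
    if h : Q.1.part a = {a} then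
      .inl ⟨eraseInsert ha Q.1,
        Nat.add_right_cancel ((card_parts_eraseInsert_of_part_eq ha h).trans Q.2)⟩
    else
      .inr ⟨⟨eraseInsert ha Q.1, (card_parts_eraseInsert_of_part_ne ha h).trans Q.2⟩,
        ⟨(Q.1.part a).erase a, erase_part_mem_eraseInsert ha h⟩⟩
  invFun
    | .inl P => ⟨insertSingleton ha P.1, by rw [card_parts_insertSingleton, P.2]⟩
    | .inr ⟨P, t⟩ => ⟨insertIntoPart ha P.1 t.2, (card_parts_insertIntoPart ha P.1 t.2).trans P.2⟩
  left_inv Q := by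
    by_cases h : Q.1.part a = {a}
    · simp only [dif_pos h]
      exact Subtype.ext (insertSingleton_eraseInsert ha h)
    · simp only [dif_neg h]
      exact Subtype.ext (insertIntoPart_eraseInsert ha h)
  right_inv
    | .inl P => by
      simp only [dif_pos (part_insertSingleton ha P.1)]
      exact congrArg Sum.inl (Subtype.ext (eraseInsert_insertSingleton ha P.1))
    | .inr ⟨P, t⟩ => by
      simp only [dif_neg (part_insertIntoPart_ne ha P.1 t.2)]
      refine congrArg Sum.inr (Sigma.subtype_ext
        (Subtype.ext (eraseInsert_insertIntoPart ha P.1 t.2)) ?_)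
      simp only [part_insertIntoPart, erase_insert fun h => ha (P.1.le t.2 h)]

lemma card_parts_eq_stirlingSecond (s : Finset α) (j : ℕ) :
    Nat.card {P : Finpartition s // #P.parts = j} = stirlingSecond #s j := by
  induction s using Finset.induction_on generalizing j with
  | empty =>
    have hparts (P : Finpartition (∅ : Finset α)) : P.parts = ∅ := parts_eq_empty_iff.2 rfl
    have : Subsingleton (Finpartition (∅ : Finset α)) :=
      ⟨fun P Q => Finpartition.ext ((hparts P).trans (hparts Q).symm)⟩
    cases j with
    | zero => simpa [hparts] using Fintype.card_eq_one_iff.2 ⟨⊥, fun P => Subsingleton.elim _ _⟩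
    | succ j => simp [hparts]
  | insert a s ha ih =>
    rw [card_insert_of_notMem ha]
    cases j with
    | zero =>
      have : IsEmpty {Q : Finpartition (insert a s) // #Q.parts = 0} :=
        ⟨fun Q => (Q.1.parts_nonempty (insert_ne_empty a s)).ne_empty (card_eq_zero.1 Q.2)⟩
      simp
    | succ b =>
      have hblocks (P : {P : Finpartition s // #P.parts = b + 1}) : Nat.card P.1.parts = b + 1 := by
        rw [Nat.card_eq_fintype_card, Fintype.card_coe, P.2]
      rw [Nat.card_congr (insertEquiv ha b), Nat.card_sum, Nat.card_sigma,
        sum_congr rfl fun P _ => hblocks P, sum_const, Finset.card_univ,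
        ← Nat.card_eq_fintype_card, ih, ih, smul_eq_mul, stirlingSecond_succ_succ]
      ring

end Finpartition

/-- The number of partitions of `{1, …, n + 1}` into `b` blocks in which `n + 1` shares its block
with no element `≤ j`; the recursion classifies them by the block of `1`. -/
def stirlingAvoid : ℕ → ℕ → ℕ → ℕ
  | n, b, 0 => stirlingSecond (n + 1) b
  | 0, b, _ + 1 => stirlingSecond 1 b
  | n + 1, b, j + 1 => stirlingAvoid n (b - 1) j + (b - 1) * stirlingAvoid n b j

@[simp] lemma stirlingAvoid_zero_right (n b : ℕ) :
    stirlingAvoid n b 0 = stirlingSecond (n + 1) b := by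
  cases n <;> rfl

@[simp] lemma stirlingAvoid_zero_left (b j : ℕ) : stirlingAvoid 0 b j = stirlingSecond 1 b := by
  cases j <;> rfl

lemma stirlingAvoid_succ_succ (n b j : ℕ) :
    stirlingAvoid (n + 1) b (j + 1) = stirlingAvoid n (b - 1) j + (b - 1) * stirlingAvoid n b j :=
  rfl

@[simp] lemma stirlingAvoid_zero_middle : ∀ n j : ℕ, stirlingAvoid n 0 j = 0
  | _, 0 => by simp
  | 0, _ + 1 => rfl
  | n + 1, j + 1 => by simp [stirlingAvoid_succ_succ, stirlingAvoid_zero_middle n j]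

lemma stirlingAvoid_eq_zero_of_lt : ∀ {n b : ℕ} (j : ℕ), n + 1 < b → stirlingAvoid n b j = 0
  | _, _, 0, h => by simp [stirlingSecond_eq_zero_of_lt h]
  | 0, _, _ + 1, h => stirlingSecond_eq_zero_of_lt h
  | n + 1, b, j + 1, h => by
    simp [stirlingAvoid_succ_succ, stirlingAvoid_eq_zero_of_lt j (show n + 1 < b - 1 by omega),
      stirlingAvoid_eq_zero_of_lt j (show n + 1 < b by omega)]

lemma stirlingAvoid_of_le : ∀ {n b j : ℕ}, b ≠ 0 → n ≤ j →
    stirlingAvoid n b j = stirlingSecond n (b - 1)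
  | 0, b, _, hb, _ => by
    obtain ⟨b, rfl⟩ := exists_eq_succ_of_ne_zero hb
    cases b <;> simp [stirlingSecond]
  | n + 1, b, j + 1, hb, hj => by
    rw [stirlingAvoid_succ_succ]
    obtain rfl | hb1 := eq_or_ne b 1
    · simp
    rw [stirlingAvoid_of_le (by omega) (by omega), stirlingAvoid_of_le hb (by omega),
      stirlingSecond_succ_left n (b - 1) (by omega)]
    ring

lemma stirlingAvoid_succ_eq_add (n b j : ℕ) (hj : j ≤ n) :
    stirlingAvoid (n + 1) b j = stirlingAvoid (n + 1) b (j + 1) + stirlingAvoid n b j := by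
  induction j generalizing n b with
  | zero =>
    cases b with
    | zero => simp
    | succ b =>
      rw [stirlingAvoid_succ_succ, stirlingAvoid_zero_right, stirlingAvoid_zero_right,
        stirlingAvoid_zero_right, stirlingSecond_succ_succ, add_tsub_cancel_right]
      ring
  | succ j ih =>
    obtain ⟨n, rfl⟩ : ∃ n', n = n' + 1 := ⟨n - 1, by omega⟩
    rw [stirlingAvoid_succ_succ (n + 1), stirlingAvoid_succ_succ (n + 1),
      ih n (b - 1) (by omega), ih n b (by omega), stirlingAvoid_succ_succ n b j]
    ring

lemma stirlingAvoid_succ_eq_sum (n b j : ℕ) :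
    stirlingAvoid (n + 1) b j =
      stirlingSecond (n + 1) (b - 1) + ∑ i ∈ Icc j n, stirlingAvoid n b i := by
  obtain rfl | hb := eq_or_ne b 0
  · simp
  induction h : n + 1 - j generalizing j with
  | zero =>
    rw [stirlingAvoid_of_le hb (by omega), Icc_eq_empty (by omega), sum_empty, add_zero]
  | succ d ih =>
    rw [stirlingAvoid_succ_eq_add n b j (by omega), ih (j + 1) (by omega),
      ← insert_Icc_add_one_left_eq_Icc (show j ≤ n by omega), sum_insert (by simp)]
    ring

deriving instance DecidableEq for Letter

/-- The words `w_{m+1} ⋯ w_1` that can stand below the letter `a_{m+1,j₀,l₀-1}` in a valid word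
(below `e_{m+1,l₀}` when `j₀ = 0`). -/
def ValidTail (m k j₀ l₀ : ℕ) (w : Fin (m + 1) → Letter) : Prop :=
  (∀ t, InAlphabet (w t)) ∧
  (w (Fin.last m) = .e m l₀ ∨ ∃ j, j₀ ≤ j ∧ j ≤ m ∧ w (Fin.last m) = .a m j l₀) ∧
  (w 0 = .e 0 k ∨ (1 ≤ k ∧ w 0 = .a 0 0 (k - 1))) ∧
  (∀ (i j l : ℕ) (hi : i < m), w ⟨i + 1, by omega⟩ = .a (i + 1) j l →
    w ⟨i, by omega⟩ = .e i (l + 1) ∨ ∃ j', j ≤ j' ∧ j' ≤ i ∧ w ⟨i, by omega⟩ = .a i j' (l + 1)) ∧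
  (∀ (i l : ℕ) (hi : i < m), w ⟨i + 1, by omega⟩ = .e (i + 1) l →
    w ⟨i, by omega⟩ = .e i l ∨ ∃ j, j ≤ i ∧ w ⟨i, by omega⟩ = .a i j l)

section

variable {m k j₀ l₀ : ℕ}

lemma ValidTail.succ_of_init {w : Fin (m + 2) → Letter} {j l : ℕ}
    (hv : ValidTail m k j l (Fin.init w)) (hα : InAlphabet (w (Fin.last _)))
    (htop : w (Fin.last _) = .e (m + 1) l₀ ∨
      ∃ j, j₀ ≤ j ∧ j ≤ m + 1 ∧ w (Fin.last _) = .a (m + 1) j l₀)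
    (hstep_a : ∀ j l, w (Fin.last _) = .a (m + 1) j l → w ⟨m, by omega⟩ = .e m (l + 1) ∨
      ∃ j', j ≤ j' ∧ j' ≤ m ∧ w ⟨m, by omega⟩ = .a m j' (l + 1))
    (hstep_e : ∀ l, w (Fin.last _) = .e (m + 1) l → w ⟨m, by omega⟩ = .e m l ∨
      ∃ j, j ≤ m ∧ w ⟨m, by omega⟩ = .a m j l) :
    ValidTail (m + 1) k j₀ l₀ w := by
  obtain ⟨hαinit, -, hbot, ha, he⟩ := hv
  refine ⟨Fin.lastCases hα hαinit, htop, hbot, fun i j l hi hw => ?_, fun i l hi hw => ?_⟩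
  · obtain hi | rfl := Nat.lt_succ_iff_lt_or_eq.1 hi
    exacts [ha i j l hi hw, hstep_a j l hw]
  · obtain hi | rfl := Nat.lt_succ_iff_lt_or_eq.1 hi
    exacts [he i l hi hw, hstep_e l hw]

lemma validTail_succ_iff {w : Fin (m + 2) → Letter} :
    ValidTail (m + 1) k j₀ l₀ w ↔
      (w (Fin.last _) = .e (m + 1) l₀ ∧ ValidTail m k 0 l₀ (Fin.init w)) ∨
      ∃ j, j₀ ≤ j ∧ j ≤ m + 1 ∧ w (Fin.last _) = .a (m + 1) j l₀ ∧
        ValidTail m k j (l₀ + 1) (Fin.init w) := by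
  constructor
  · rintro ⟨hα, htop, hbot, ha, he⟩
    have tail (j l : ℕ) (h : w ⟨m, by omega⟩ = .e m l ∨
        ∃ j', j ≤ j' ∧ j' ≤ m ∧ w ⟨m, by omega⟩ = .a m j' l) : ValidTail m k j l (Fin.init w) :=
      ⟨fun t => hα _, h, hbot, fun i j l hi => ha i j l (by omega),
        fun i l hi => he i l (by omega)⟩
    rcases htop with htop | ⟨j, hj₀, hjm, htop⟩
    · refine .inl ⟨htop, tail 0 l₀ ?_⟩
      obtain h | ⟨j, hjm, h⟩ := he m l₀ (by omega) htop
      exacts [.inl h, .inr ⟨j, j.zero_le, hjm, h⟩]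
    · exact .inr ⟨j, hj₀, hjm, htop, tail j (l₀ + 1) (ha m j l₀ (by omega) htop)⟩
  · rintro (⟨htop, hv⟩ | ⟨j, hj₀, hjm, htop, hv⟩)
    · refine hv.succ_of_init (htop ▸ trivial) (.inl htop) (fun _ _ h => by simp [htop] at h)
        fun l h => ?_
      obtain rfl : l₀ = l := by simpa [htop] using h
      obtain h | ⟨j, -, hjm, h⟩ := hv.2.1
      exacts [.inl h, .inr ⟨j, hjm, h⟩]
    · refine hv.succ_of_init (htop ▸ hjm) (.inr ⟨j, hj₀, hjm, htop⟩) (fun j' l h => ?_)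
        fun _ h => by simp [htop] at h
      obtain ⟨rfl, rfl⟩ : j = j' ∧ l₀ = l := by simpa [htop] using h
      exact hv.2.1

def Letter.secondIndex : Letter → ℕ
  | .a _ j _ => j
  | .e _ _ => 0

lemma ValidTail.last_eq_a {w : Fin (m + 2) → Letter} (hw : ValidTail (m + 1) k j₀ l₀ w)
    (h : w (Fin.last _) ≠ .e (m + 1) l₀) :
    (w (Fin.last _)).secondIndex ∈ Icc j₀ (m + 1) ∧
      w (Fin.last _) = .a (m + 1) (w (Fin.last _)).secondIndex l₀ ∧
      ValidTail m k (w (Fin.last _)).secondIndex (l₀ + 1) (Fin.init w) := by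
  obtain ⟨j, hj₀, hjm, htop, hv⟩ := (validTail_succ_iff.1 hw).resolve_left fun h' => h h'.1
  simpa [htop, Letter.secondIndex] using ⟨⟨hj₀, hjm⟩, hv⟩

def validTailSuccEquiv (m k j₀ l₀ : ℕ) :
    {w : Fin (m + 2) → Letter // ValidTail (m + 1) k j₀ l₀ w} ≃
      {w : Fin (m + 1) → Letter // ValidTail m k 0 l₀ w} ⊕
        Σ j : Icc j₀ (m + 1), {w : Fin (m + 1) → Letter // ValidTail m k j (l₀ + 1) w} where
  toFun w :=
    if h : w.1 (Fin.last _) = .e (m + 1) l₀ then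
      .inl ⟨Fin.init w.1, by
        obtain h' | ⟨j, -, -, h', -⟩ := validTail_succ_iff.1 w.2
        · exact h'.2
        · simp [h] at h'⟩
    else
      .inr ⟨⟨_, (w.2.last_eq_a h).1⟩, ⟨Fin.init w.1, (w.2.last_eq_a h).2.2⟩⟩
  invFun
    | .inl w => ⟨Fin.snoc w.1 (.e (m + 1) l₀), validTail_succ_iff.2 <| .inl
        ⟨Fin.snoc_last _ _, by rw [Fin.init_snoc]; exact w.2⟩⟩
    | .inr ⟨j, w⟩ => ⟨Fin.snoc w.1 (.a (m + 1) j l₀), validTail_succ_iff.2 <| .inr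
        ⟨j, (mem_Icc.1 j.2).1, (mem_Icc.1 j.2).2, Fin.snoc_last _ _,
          by rw [Fin.init_snoc]; exact w.2⟩⟩
  left_inv w := by
    by_cases h : w.1 (Fin.last _) = .e (m + 1) l₀
    · simp only [dif_pos h]
      exact Subtype.ext ((congrArg (Fin.snoc (Fin.init w.1)) h.symm).trans (Fin.snoc_init_self _))
    · simp only [dif_neg h]
      exact Subtype.ext ((congrArg (Fin.snoc (Fin.init w.1)) (w.2.last_eq_a h).2.1.symm).trans
        (Fin.snoc_init_self _))
  right_inv
    | .inl w => by simp [Fin.init_snoc]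
    | .inr ⟨j, w⟩ => by
      simp only [Fin.snoc_last, reduceCtorEq, dite_false]
      exact congrArg Sum.inr
        (Sigma.subtype_ext (Subtype.ext (by simp [Letter.secondIndex])) (by simp))

lemma validTail_zero_iff {w : Fin 1 → Letter} :
    ValidTail 0 k j₀ l₀ w ↔ (w 0 = .e 0 k ∧ l₀ = k) ∨ (w 0 = .a 0 0 l₀ ∧ j₀ = 0 ∧ k = l₀ + 1) := by
  constructor
  · rintro ⟨-, htop, hbot, -, -⟩
    rw [Fin.last_zero] at htop
    rcases htop with h | ⟨j, hj₀, hj, h⟩ <;> rw [h] at hbot ⊢ <;> simp at hbot ⊢ <;> omega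
  · rintro (⟨h, rfl⟩ | ⟨h, rfl, rfl⟩)
    · exact ⟨fun t => by rw [Subsingleton.elim (α := Fin 1) t 0, h]; trivial, .inl h, .inl h,
        fun _ _ _ hi => (Nat.not_lt_zero _ hi).elim, fun _ _ hi => (Nat.not_lt_zero _ hi).elim⟩
    · exact ⟨fun t => by rw [Subsingleton.elim (α := Fin 1) t 0, h]; exact le_rfl,
        .inr ⟨0, le_rfl, le_rfl, h⟩, .inr ⟨by omega, h⟩,
        fun _ _ _ hi => (Nat.not_lt_zero _ hi).elim, fun _ _ hi => (Nat.not_lt_zero _ hi).elim⟩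

def validTailZeroEquiv (k j₀ l₀ : ℕ) :
    {w // ValidTail 0 k j₀ l₀ w} ≃
      {x : Letter // (x = .e 0 k ∧ l₀ = k) ∨ (x = .a 0 0 l₀ ∧ j₀ = 0 ∧ k = l₀ + 1)} :=
  (Equiv.funUnique (Fin 1) Letter).subtypeEquiv fun _ => validTail_zero_iff

lemma card_validTail_zero :
    Nat.card {w // ValidTail 0 k j₀ l₀ w} =
      if l₀ ≤ k then stirlingAvoid 1 (2 - (k - l₀)) j₀ else 0 := by
  rw [Nat.card_congr (validTailZeroEquiv k j₀ l₀)]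
  obtain h | rfl | rfl | h : k < l₀ ∨ k = l₀ ∨ k = l₀ + 1 ∨ l₀ + 2 ≤ k := by omega
  · simp [h.ne', h.not_ge, show k ≠ l₀ + 1 by omega]
  · cases j₀ <;> simp [stirlingAvoid_succ_succ, stirlingSecond_self, stirlingSecond_eq_zero_of_lt]
  · cases j₀ <;> simp [stirlingAvoid_succ_succ, stirlingSecond_one_right]
  · simp [show ¬ k = l₀ + 1 by omega, show ¬ l₀ = k by omega, show 2 - (k - l₀) = 0 by omega,
      show l₀ ≤ k by omega]

lemma finite_validTail : ∀ m k j₀ l₀ : ℕ, Finite {w // ValidTail m k j₀ l₀ w}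
  | 0, k, j₀, l₀ =>
    have : Finite {x : Letter // (x = .e 0 k ∧ l₀ = k) ∨ (x = .a 0 0 l₀ ∧ j₀ = 0 ∧ k = l₀ + 1)} :=
      ((Set.toFinite {.e 0 k, .a 0 0 l₀}).subset fun x hx => by
        rcases hx with ⟨rfl, -⟩ | ⟨rfl, -⟩ <;> simp).to_subtype
    .of_equiv _ (validTailZeroEquiv k j₀ l₀).symm
  | m + 1, k, j₀, l₀ =>
    have := finite_validTail m k 0 l₀
    have := fun j => finite_validTail m k j (l₀ + 1)
    .of_equiv _ (validTailSuccEquiv m k j₀ l₀).symm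

lemma card_validTail : ∀ m k j₀ l₀ : ℕ, Nat.card {w // ValidTail m k j₀ l₀ w} =
    if l₀ ≤ k then stirlingAvoid (m + 1) (m + 2 - (k - l₀)) j₀ else 0
  | 0, _, _, _ => card_validTail_zero
  | m + 1, k, j₀, l₀ => by
    have := finite_validTail m k 0 l₀
    have := fun j => finite_validTail m k j (l₀ + 1)
    rw [Nat.card_congr (validTailSuccEquiv m k j₀ l₀), Nat.card_sum, Nat.card_sigma]
    simp only [card_validTail m k]
    rw [sum_coe_sort (Icc j₀ (m + 1)) fun j =>
      if l₀ + 1 ≤ k then stirlingAvoid (m + 1) (m + 2 - (k - (l₀ + 1))) j else 0]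
    obtain h | rfl | h : k < l₀ ∨ k = l₀ ∨ l₀ < k := by omega
    · simp [h.not_ge, show ¬ l₀ + 1 ≤ k by omega]
    · simp [stirlingAvoid_succ_eq_sum (m + 1), stirlingAvoid_eq_zero_of_lt]
    · simp only [if_pos h.le, if_pos (show l₀ + 1 ≤ k from h)]
      rw [stirlingAvoid_succ_eq_sum (m + 1),
        stirlingAvoid_zero_right, show m + 1 + 2 - (k - l₀) - 1 = m + 2 - (k - l₀) by omega,
        show m + 2 - (k - (l₀ + 1)) = m + 1 + 2 - (k - l₀) by omega]

end

lemma validWord_iff_validTail {m k : ℕ} (hn : 1 ≤ m + 1) (w : Fin (m + 1) → Letter) :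
    ValidWord (m + 1) k hn w ↔ ValidTail m k 0 0 w := by
  simp only [ValidWord, Nat.add_sub_cancel]
  constructor
  · rintro ⟨hα, htop, hbot, ha, he⟩
    refine ⟨hα, htop.imp_right fun ⟨j, hj, h⟩ => ⟨j, j.zero_le, hj, h⟩, hbot,
      fun i j l hi h => ?_, fun i l hi h => ?_⟩
    · simpa using ha (i + 1) j l (by omega) (by omega) h
    · simpa using he (i + 1) l (by omega) (by omega) h
  · rintro ⟨hα, htop, hbot, ha, he⟩
    refine ⟨hα, htop.imp_right fun ⟨j, _, hj, h⟩ => ⟨j, hj, h⟩, hbot,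
      fun i j l hi hm h => ?_, fun i l hi hm h => ?_⟩
    · obtain ⟨i, rfl⟩ := Nat.exists_eq_add_of_le' hi
      exact ha i j l (by omega) h
    · obtain ⟨i, rfl⟩ := Nat.exists_eq_add_of_le' hi
      exact he i l (by omega) h

theorem card_validWords_general (n k : ℕ) (hn : 1 ≤ n) :
    Nat.card {w : Fin n → Letter // ValidWord n k hn w}
      = stirlingSubset (n + 1) (n + 1 - k) := by
  obtain ⟨m, rfl⟩ : ∃ m, n = m + 1 := ⟨n - 1, by omega⟩
  rw [Nat.card_congr (Equiv.subtypeEquivRight (validWord_iff_validTail hn)), card_validTail,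
    if_pos k.zero_le, Nat.sub_zero, stirlingAvoid_zero_right, stirlingSubset,
    Finpartition.card_parts_eq_stirlingSecond, Finset.card_univ, Fintype.card_fin]

/-- For `n ≥ 1` and `0 ≤ k ≤ n`, the number of valid words of length `n` for
the parameters `(n,k)` equals the Stirling subset number `S(n+1, n+1−k)`. -/
theorem card_validWords (n k : ℕ) (hn : 1 ≤ n) (hk : k ≤ n) :
    Nat.card {w : Fin n → Letter // ValidWord n k hn w}
      = stirlingSubset (n + 1) (n + 1 - k) :=
  card_validWords_general n k hn
end
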